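/- Let A, B be unital algebras over ℂ, M an (A,B)-bimodule, N a (B,A)-bimodule, and U = [[A, M],[N, B]] a generalized matrix algebra (arising from a Morita context). Let m, n be positive integers with m ≠ n, and let δ : U → U be an (m,n)-Jordan derivable mapping at zero with δ(1) = 0. If M is faithful as a left A-module and faithful as a right B-module, then δ = 0. -/

import Mathlib

/-!
`U` is a `ℂ`-vector space, so nonzero integer multiples can be cancelled. For an idempotent `e`,
the pair `e, 1 - e` has zero products and `δ (1 - e) = -δ e`, so the identity reads
`m • (δ e * S) + n • (S * δ e) = 0` with `S = 1 - 2e`, `S * S = 1`. Multiplying by `S` on either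
side gives `(m² - n²) • δ e = 0`, so `δ` kills idempotents. Applying the identity to
`e ± W, 1 - e ∓ W` kills every `W` in `eU(1 - e)`, in particular the corners `M` and `N`. For `a` in
the corner `A`, pairing `a` with `1 - e` confines `δ a` to `A`, and pairing `a - aW` with
`1 - e + W` gives `δ a * W = 0` for all `W ∈ M`, whence `δ a = 0` by faithfulness; `B` is symmetric.
-/

set_option linter.unusedSectionVars false

open MulOpposite

/-- A Morita context: bimodule pairings `Φ : M ⊗_B N → A` and `Ψ : N ⊗_A M → B`
making `[[A, M],[N, B]]` an associative (generalized matrix) algebra. -/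
class MoritaContext (A B : outParam Type*) (M N : Type*) [Ring A] [Ring B]
    [AddCommGroup M] [Module A M] [Module Bᵐᵒᵖ M] [SMulCommClass A Bᵐᵒᵖ M]
    [AddCommGroup N] [Module B N] [Module Aᵐᵒᵖ N] [SMulCommClass B Aᵐᵒᵖ N] where
  Φ : M →+ N →+ A
  Ψ : N →+ M →+ B
  Φ_smul_left : ∀ (a : A) (x : M) (y : N), Φ (a • x) y = a * Φ x y
  Φ_smul_right : ∀ (a : A) (x : M) (y : N), Φ x (op a • y) = Φ x y * a
  Φ_balanced : ∀ (b : B) (x : M) (y : N), Φ (op b • x) y = Φ x (b • y)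
  Ψ_smul_left : ∀ (b : B) (y : N) (x : M), Ψ (b • y) x = b * Ψ y x
  Ψ_smul_right : ∀ (b : B) (y : N) (x : M), Ψ y (op b • x) = Ψ y x * b
  Ψ_balanced : ∀ (a : A) (y : N) (x : M), Ψ (op a • y) x = Ψ y (a • x)
  assoc₁ : ∀ (x : M) (y : N) (x' : M), Φ x y • x' = op (Ψ y x') • x
  assoc₂ : ∀ (y : N) (x : M) (y' : N), Ψ y x • y' = op (Φ x y') • y

/-- The generalized matrix algebra `[[A, M],[N, B]]`, realized on the underlying
set `A × M × N × B`. -/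
abbrev GMA (A B M N : Type*) := A × M × N × B

namespace GMA

variable {A B M N : Type*} [Ring A] [Ring B]
  [AddCommGroup M] [Module A M] [Module Bᵐᵒᵖ M] [SMulCommClass A Bᵐᵒᵖ M]
  [AddCommGroup N] [Module B N] [Module Aᵐᵒᵖ N] [SMulCommClass B Aᵐᵒᵖ N]
  [MoritaContext A B M N]

/-- The pairing `M × N → A`. -/
abbrev φ (x : M) (y : N) : A := MoritaContext.Φ (B := B) x y

/-- The pairing `N × M → B`. -/
abbrev ψ (y : N) (x : M) : B := MoritaContext.Ψ (A := A) y x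

lemma φ_add_left (x x' : M) (y : N) : φ (A := A) (B := B) (x + x') y = φ x y + φ x' y := by
  simp [φ]

lemma φ_add_right (x : M) (y y' : N) : φ (A := A) (B := B) x (y + y') = φ x y + φ x y' := by
  simp [φ]

lemma ψ_add_left (y y' : N) (x : M) : ψ (A := A) (B := B) (y + y') x = ψ y x + ψ y' x := by
  simp [ψ]

lemma ψ_add_right (y : N) (x x' : M) : ψ (A := A) (B := B) y (x + x') = ψ y x + ψ y x' := by
  simp [ψ]

lemma φ_zero_left (y : N) : φ (A := A) (B := B) (0 : M) y = 0 := by simp [φ]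
lemma φ_zero_right (x : M) : φ (A := A) (B := B) x (0 : N) = 0 := by simp [φ]
lemma ψ_zero_left (x : M) : ψ (A := A) (B := B) (0 : N) x = 0 := by simp [ψ]
lemma ψ_zero_right (y : N) : ψ (A := A) (B := B) y (0 : M) = 0 := by simp [ψ]

lemma φ_smul_left (a : A) (x : M) (y : N) : φ (B := B) (a • x) y = a * φ x y :=
  MoritaContext.Φ_smul_left a x y
lemma φ_smul_right (a : A) (x : M) (y : N) : φ (B := B) x (op a • y) = φ x y * a :=
  MoritaContext.Φ_smul_right a x y
lemma φ_balanced (b : B) (x : M) (y : N) : φ (A := A) (op b • x) y = φ x (b • y) :=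
  MoritaContext.Φ_balanced b x y
lemma ψ_smul_left (b : B) (y : N) (x : M) : ψ (A := A) (b • y) x = b * ψ y x :=
  MoritaContext.Ψ_smul_left b y x
lemma ψ_smul_right (b : B) (y : N) (x : M) : ψ (A := A) y (op b • x) = ψ y x * b :=
  MoritaContext.Ψ_smul_right b y x
lemma ψ_balanced (a : A) (y : N) (x : M) : ψ (B := B) (op a • y) x = ψ y (a • x) :=
  MoritaContext.Ψ_balanced a y x
lemma assoc₁ (x : M) (y : N) (x' : M) : φ (B := B) x y • x' = op (ψ (A := A) y x') • x :=
  MoritaContext.assoc₁ x y x'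
lemma assoc₂ (y : N) (x : M) (y' : N) : ψ (A := A) y x • y' = op (φ (B := B) x y') • y :=
  MoritaContext.assoc₂ y x y'

instance : Mul (GMA A B M N) :=
  ⟨fun p q =>
    (p.1 * q.1 + φ p.2.1 q.2.2.1,
     p.1 • q.2.1 + op q.2.2.2 • p.2.1,
     op q.1 • p.2.2.1 + p.2.2.2 • q.2.2.1,
     p.2.2.2 * q.2.2.2 + ψ p.2.2.1 q.2.1)⟩

instance : One (GMA A B M N) := ⟨((1 : A), (0 : M), (0 : N), (1 : B))⟩

@[simp] lemma mul_def (p q : GMA A B M N) :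
    p * q =
      (p.1 * q.1 + φ p.2.1 q.2.2.1,
       p.1 • q.2.1 + op q.2.2.2 • p.2.1,
       op q.1 • p.2.2.1 + p.2.2.2 • q.2.2.1,
       p.2.2.2 * q.2.2.2 + ψ p.2.2.1 q.2.1) := rfl

@[simp] lemma one_def : (1 : GMA A B M N) = ((1 : A), (0 : M), (0 : N), (1 : B)) := rfl

instance instRing : Ring (GMA A B M N) :=
  { (inferInstance : AddCommGroup (GMA A B M N)) with
    left_distrib := by
      rintro ⟨a₁, x₁, y₁, b₁⟩ ⟨a₂, x₂, y₂, b₂⟩ ⟨a₃, x₃, y₃, b₃⟩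
      simp [Prod.ext_iff, Prod.add_def, mul_add, smul_add, add_smul,
        φ_add_right, ψ_add_right]
      refine ⟨by abel, by abel, by abel, by abel⟩
    right_distrib := by
      rintro ⟨a₁, x₁, y₁, b₁⟩ ⟨a₂, x₂, y₂, b₂⟩ ⟨a₃, x₃, y₃, b₃⟩
      simp [Prod.ext_iff, Prod.add_def, add_mul, smul_add, add_smul,
        φ_add_left, ψ_add_left]
      refine ⟨by abel, by abel, by abel, by abel⟩
    zero_mul := by
      rintro ⟨a, x, y, b⟩
      simp [Prod.ext_iff, φ_zero_left, ψ_zero_left]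
    mul_zero := by
      rintro ⟨a, x, y, b⟩
      simp [Prod.ext_iff, φ_zero_right, ψ_zero_right]
    mul_assoc := by
      rintro ⟨a₁, x₁, y₁, b₁⟩ ⟨a₂, x₂, y₂, b₂⟩ ⟨a₃, x₃, y₃, b₃⟩
      simp only [mul_def, Prod.ext_iff]
      refine ⟨?_, ?_, ?_, ?_⟩
      · simp [add_mul, mul_add, mul_assoc, φ_add_left, φ_add_right,
          φ_smul_left, φ_smul_right, φ_balanced]
        abel
      · simp [add_smul, smul_add, mul_smul, assoc₁]
        rw [smul_comm a₁ (op b₃) x₂]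
        abel
      · simp [add_smul, smul_add, mul_smul, assoc₂]
        rw [smul_comm b₁ (op a₃) y₂]
        abel
      · simp [add_mul, mul_add, mul_assoc, ψ_add_left, ψ_add_right,
          ψ_smul_left, ψ_smul_right, ψ_balanced]
        abel
    one_mul := by
      rintro ⟨a, x, y, b⟩
      simp [Prod.ext_iff, φ_zero_left, ψ_zero_left]
    mul_one := by
      rintro ⟨a, x, y, b⟩
      simp [Prod.ext_iff, φ_zero_right, ψ_zero_right]
    }

end GMA

attribute [simp] GMA.φ_zero_left GMA.φ_zero_right GMA.ψ_zero_left GMA.ψ_zero_right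

section JordanDerivableAtZero

variable {R : Type*} [Ring R]

def IsJordanDerivableAtZero (m n : ℕ) (δ : R →+ R) : Prop :=
  ∀ X Y : R, X * Y = 0 → Y * X = 0 →
    (m + n) • δ (X * Y + Y * X) =
      (2 * m) • (δ X * Y) + (2 * m) • (δ Y * X) + (2 * n) • (X * δ Y) + (2 * n) • (Y * δ X)

lemma IsIdempotentElem.one_sub_two_nsmul_mul_self {e : R} (he : IsIdempotentElem e) :
    (1 - 2 • e) * (1 - 2 • e) = 1 := by
  simp only [sub_mul, mul_sub, one_mul, mul_one, smul_mul_assoc, mul_smul_comm, he.eq]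
  abel

lemma mul_self_eq_zero_of_mul_eq_self_of_mul_eq_zero {e W : R} (heW : e * W = W)
    (hWe : W * e = 0) : W * W = 0 :=
  calc W * W = W * e * W := by rw [mul_assoc, heW]
    _ = 0 := by rw [hWe, zero_mul]

variable [IsAddTorsionFree R] {m n : ℕ}

lemma eq_zero_of_nsmul_mul_add_nsmul_mul_of_mul_self_eq_one (hmn : m ≠ n) {S T : R}
    (hS : S * S = 1) (h : m • (T * S) + n • (S * T) = 0) : T = 0 := by
  have hl : m • (S * T * S) + n • T = 0 := by
    simpa only [mul_add, mul_smul_comm, ← mul_assoc, hS, one_mul, mul_zero] using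
      congr_arg (S * ·) h
  have hr : m • T + n • (S * T * S) = 0 := by
    simpa only [add_mul, smul_mul_assoc, mul_assoc, hS, mul_one, zero_mul] using
      congr_arg (· * S) h
  have hsq : ((m : ℤ) ^ 2 - (n : ℤ) ^ 2) • T = 0 := by
    linear_combination (norm := module) (m : ℤ) • hr - (n : ℤ) • hl
  refine (IsAddTorsionFree.zsmul_eq_zero_iff_right ?_).mp hsq
  rw [sub_ne_zero, ne_eq, sq_eq_sq₀ (by positivity) (by positivity)]
  exact_mod_cast hmn

lemma IsIdempotentElem.eq_zero_of_nsmul_add_nsmul_eq_zero (hmn : m ≠ n) {e T : R}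
    (he : IsIdempotentElem e) (h : m • (T * (1 - e) - T * e) + n • ((1 - e) * T - e * T) = 0) :
    T = 0 := by
  refine eq_zero_of_nsmul_mul_add_nsmul_mul_of_mul_self_eq_one hmn
    he.one_sub_two_nsmul_mul_self ?_
  rw [← h]
  noncomm_ring

lemma IsIdempotentElem.mul_eq_zero_of_nsmul_mul_add_nsmul_mul (hm : m ≠ 0) (hn : n ≠ 0)
    {e T : R} (he : IsIdempotentElem e) (h : m • (T * e) + n • (e * T) = 0) :
    T * e = 0 ∧ e * T = 0 := by
  have hl : m • (e * T * e) + n • (e * T) = 0 := by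
    simpa only [mul_add, mul_smul_comm, ← mul_assoc, he.eq, mul_zero] using congr_arg (e * ·) h
  have hr : m • (T * e) + n • (e * T * e) = 0 := by
    simpa only [add_mul, smul_mul_assoc, mul_assoc, he.eq, zero_mul] using congr_arg (· * e) h
  have hlr : (m + n) • (e * T * e) = 0 := by
    simpa only [mul_add, mul_smul_comm, ← mul_assoc, he.eq, add_nsmul, mul_zero] using
      congr_arg (e * ·) hr
  rw [nsmul_eq_zero_iff_right (by omega)] at hlr
  rw [hlr, smul_zero] at hl hr
  exact ⟨(nsmul_eq_zero_iff_right hm).mp (by simpa using hr),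
    (nsmul_eq_zero_iff_right hn).mp (by simpa using hl)⟩

namespace IsJordanDerivableAtZero

variable {δ : R →+ R} (hδ : IsJordanDerivableAtZero m n δ)
include hδ

lemma nsmul_add_nsmul_eq_zero {X Y : R} (hXY : X * Y = 0) (hYX : Y * X = 0) :
    m • (δ X * Y + δ Y * X) + n • (X * δ Y + Y * δ X) = 0 := by
  have h := hδ X Y hXY hYX
  rw [hXY, hYX, add_zero, map_zero, smul_zero] at h
  refine (nsmul_eq_zero_iff_right two_ne_zero).mp ?_
  rw [h]
  simp only [smul_add, mul_nsmul']
  abel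

lemma map_isIdempotentElem (hmn : m ≠ n) (h1 : δ 1 = 0) {e : R} (he : IsIdempotentElem e) :
    δ e = 0 := by
  have h := hδ.nsmul_add_nsmul_eq_zero he.mul_one_sub_self he.one_sub_mul_self
  rw [map_sub, h1, zero_sub] at h
  refine he.eq_zero_of_nsmul_add_nsmul_eq_zero hmn ?_
  rw [← h]
  noncomm_ring

lemma map_eq_zero_of_mul_eq_self_of_mul_eq_zero (hmn : m ≠ n) (h1 : δ 1 = 0) {e W : R}
    (he : IsIdempotentElem e) (heW : e * W = W) (hWe : W * e = 0) : δ W = 0 := by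
  have hWW := mul_self_eq_zero_of_mul_eq_self_of_mul_eq_zero heW hWe
  have hδe := hδ.map_isIdempotentElem hmn h1 he
  have hδf := hδ.map_isIdempotentElem hmn h1 he.one_sub
  have hplus := hδ.nsmul_add_nsmul_eq_zero (X := e + W) (Y := 1 - e - W)
    (by simp only [add_mul, mul_sub, mul_one, he.eq, heW, hWe, hWW]; abel)
    (by simp only [sub_mul, mul_add, one_mul, he.eq, heW, hWe, hWW]; abel)
  have hminus := hδ.nsmul_add_nsmul_eq_zero (X := e - W) (Y := 1 - e + W)
    (by simp only [sub_mul, mul_add, mul_sub, mul_one, he.eq, heW, hWe, hWW]; abel)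
    (by simp only [add_mul, sub_mul, mul_sub, one_mul, he.eq, heW, hWe, hWW]; abel)
  rw [map_add, map_sub, hδe, hδf] at hplus
  rw [map_sub, map_add, hδe, hδf] at hminus
  refine he.eq_zero_of_nsmul_add_nsmul_eq_zero hmn ((nsmul_eq_zero_iff_right two_ne_zero).mp ?_)
  simp only [nsmul_eq_mul, Nat.cast_ofNat] at hplus hminus ⊢
  linear_combination (norm := noncomm_ring) hplus - hminus

lemma map_mul_eq_zero_and_mul_map_eq_zero (hm : m ≠ 0) (hn : n ≠ 0) (hmn : m ≠ n)
    (h1 : δ 1 = 0) {g a : R} (hg : IsIdempotentElem g) (hag : a * g = 0) (hga : g * a = 0) :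
    δ a * g = 0 ∧ g * δ a = 0 := by
  have h := hδ.nsmul_add_nsmul_eq_zero hag hga
  rw [hδ.map_isIdempotentElem hmn h1 hg, zero_mul, mul_zero, add_zero, zero_add] at h
  exact hg.mul_eq_zero_of_nsmul_mul_add_nsmul_mul hm hn h

lemma map_mul_eq_zero (hm : m ≠ 0) (hn : n ≠ 0) (hmn : m ≠ n) (h1 : δ 1 = 0) {e a W : R}
    (he : IsIdempotentElem e) (hea : e * a = a) (hae : a * e = a) (heW : e * W = W)
    (hWe : W * e = 0) : δ a * W = 0 := by
  have hWW := mul_self_eq_zero_of_mul_eq_self_of_mul_eq_zero heW hWe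
  have hWa : W * a = 0 := by rw [← hea, ← mul_assoc, hWe, zero_mul]
  have heaW : e * (a * W) = a * W := by rw [← mul_assoc, hea]
  have haWe : a * W * e = 0 := by rw [mul_assoc, hWe, mul_zero]
  obtain ⟨hTf, hfT⟩ := hδ.map_mul_eq_zero_and_mul_map_eq_zero hm hn hmn h1 he.one_sub
    (by rw [mul_sub, mul_one, hae, sub_self]) (by rw [sub_mul, one_mul, hea, sub_self])
  have hWT : W * δ a = 0 := by
    have heT : δ a = e * δ a := by rwa [sub_mul, one_mul, sub_eq_zero] at hfT
    rw [heT, ← mul_assoc, hWe, zero_mul]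
  have h := hδ.nsmul_add_nsmul_eq_zero (X := a - a * W) (Y := 1 - e + W)
    (by simp only [sub_mul, mul_add, mul_sub, mul_one, hae, haWe, mul_assoc, hWW, mul_zero]; abel)
    (by simp only [add_mul, sub_mul, mul_sub, one_mul, hea, hWa, ← mul_assoc, zero_mul]; abel)
  rw [map_sub, hδ.map_eq_zero_of_mul_eq_self_of_mul_eq_zero hmn h1 he heaW haWe, map_add,
    hδ.map_isIdempotentElem hmn h1 he.one_sub, hδ.map_eq_zero_of_mul_eq_self_of_mul_eq_zero hmn h1
    he heW hWe] at h
  simp only [sub_zero, zero_add, add_zero, zero_mul, mul_zero, mul_add, add_mul, hTf, hfT, hWT,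
    smul_zero] at h
  exact (nsmul_eq_zero_iff_right hm).mp h

lemma mul_map_eq_zero (hm : m ≠ 0) (hn : n ≠ 0) (hmn : m ≠ n) (h1 : δ 1 = 0) {e b W : R}
    (he : IsIdempotentElem e) (heb : e * b = 0) (hbe : b * e = 0) (heW : e * W = W)
    (hWe : W * e = 0) : W * δ b = 0 := by
  have hWW := mul_self_eq_zero_of_mul_eq_self_of_mul_eq_zero heW hWe
  have hbW : b * W = 0 := by rw [← heW, ← mul_assoc, hbe, zero_mul]
  have heWb : e * (W * b) = W * b := by rw [← mul_assoc, heW]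
  have hWbe : W * b * e = 0 := by rw [mul_assoc, hbe, mul_zero]
  obtain ⟨hTe, heT⟩ := hδ.map_mul_eq_zero_and_mul_map_eq_zero hm hn hmn h1 he hbe heb
  have hTW : δ b * W = 0 := by rw [← heW, ← mul_assoc, hTe, zero_mul]
  have h := hδ.nsmul_add_nsmul_eq_zero (X := b - W * b) (Y := e + W)
    (by simp only [sub_mul, mul_add, hbe, hbW, mul_assoc, mul_zero]; abel)
    (by simp only [add_mul, mul_sub, heb, hWW, ← mul_assoc, heW, zero_mul]; abel)
  rw [map_sub, hδ.map_eq_zero_of_mul_eq_self_of_mul_eq_zero hmn h1 he heWb hWbe, map_add,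
    hδ.map_isIdempotentElem hmn h1 he, hδ.map_eq_zero_of_mul_eq_self_of_mul_eq_zero hmn h1
    he heW hWe] at h
  simp only [sub_zero, zero_add, add_zero, zero_mul, mul_zero, mul_add, add_mul, hTe, heT, hTW,
    smul_zero] at h
  exact (nsmul_eq_zero_iff_right hn).mp h

end IsJordanDerivableAtZero

end JordanDerivableAtZero

namespace GMA

variable {A B M N : Type*} [Ring A] [Ring B]
  [AddCommGroup M] [Module A M] [Module Bᵐᵒᵖ M] [SMulCommClass A Bᵐᵒᵖ M]
  [AddCommGroup N] [Module B N] [Module Aᵐᵒᵖ N] [SMulCommClass B Aᵐᵒᵖ N]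
  [MoritaContext A B M N]

lemma isIdempotentElem_e₁₁ : IsIdempotentElem ((1, 0, 0, 0) : GMA A B M N) := by
  simp [IsIdempotentElem]

lemma isIdempotentElem_e₂₂ : IsIdempotentElem ((0, 0, 0, 1) : GMA A B M N) := by
  simp [IsIdempotentElem]

lemma eq_zero_of_mul_eq_zero_of_faithful_left (hfaith : ∀ a : A, (∀ x : M, a • x = 0) → a = 0)
    {T : GMA A B M N} (hTe : T * (0, 0, 0, 1) = 0) (heT : (0, 0, 0, 1) * T = 0)
    (hTW : ∀ x : M, T * (0, x, 0, 0) = 0) : T = 0 := by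
  obtain ⟨a, x, y, b⟩ := T
  simp at hTe heT hTW
  simp [hfaith a fun x => (hTW x).1, hTe, heT]

lemma eq_zero_of_mul_eq_zero_of_faithful_right
    (hfaith : ∀ b : B, (∀ x : M, MulOpposite.op b • x = 0) → b = 0)
    {T : GMA A B M N} (hTe : T * (1, 0, 0, 0) = 0) (heT : (1, 0, 0, 0) * T = 0)
    (hWT : ∀ x : M, (0, x, 0, 0) * T = 0) : T = 0 := by
  obtain ⟨a, x, y, b⟩ := T
  simp at hTe heT hWT
  simp [hfaith b fun x => (hWT x).2, hTe, heT]

end GMA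

/-- Let `U = [[A, M],[N, B]]` be a generalized matrix algebra
(arising from a Morita context) over `ℂ`, with `M` faithful as a left `A`-module
and as a right `B`-module.  Every `(m,n)`-Jordan derivable mapping at zero
(`0 < m`, `0 < n`, `m ≠ n`) from `U` into itself with `δ 1 = 0` is zero. -/
theorem mn_jordan_derivable_at_zero_generalized_matrix
    {A B M N : Type*} [Ring A] [Algebra ℂ A] [Ring B] [Algebra ℂ B]
    [AddCommGroup M] [Module ℂ M] [Module A M] [Module Bᵐᵒᵖ M]
    [SMulCommClass A Bᵐᵒᵖ M]
    [AddCommGroup N] [Module ℂ N] [Module B N] [Module Aᵐᵒᵖ N]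
    [SMulCommClass B Aᵐᵒᵖ N]
    [MoritaContext A B M N]
    (hfaithL : ∀ a : A, (∀ x : M, a • x = 0) → a = 0)
    (hfaithR : ∀ b : B, (∀ x : M, MulOpposite.op b • x = 0) → b = 0)
    (m n : ℕ) (hm : 0 < m) (hn : 0 < n) (hmn : m ≠ n)
    (δ : GMA A B M N → GMA A B M N)
    (hadd : ∀ p q : GMA A B M N, δ (p + q) = δ p + δ q)
    (hδ1 : δ 1 = 0)
    (hzero : ∀ X Y : GMA A B M N, X * Y = 0 → Y * X = 0 →
      (m + n) • δ (X * Y + Y * X) =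
        (2 * m) • (δ X * Y) + (2 * m) • (δ Y * X)
          + (2 * n) • (X * δ Y) + (2 * n) • (Y * δ X)) :
    ∀ p : GMA A B M N, δ p = 0 := by
  have : IsAddTorsionFree (GMA A B M N) := .of_isTorsionFree ℂ _
  have hδ : IsJordanDerivableAtZero m n (AddMonoidHom.mk' δ hadd) := hzero
  have he := GMA.isIdempotentElem_e₁₁ (A := A) (B := B) (M := M) (N := N)
  have hf := GMA.isIdempotentElem_e₂₂ (A := A) (B := B) (M := M) (N := N)
  rintro ⟨a, x, y, b⟩
  have hA : δ (a, 0, 0, 0) = 0 := by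
    obtain ⟨hTf, hfT⟩ := hδ.map_mul_eq_zero_and_mul_map_eq_zero hm.ne' hn.ne' hmn hδ1 hf
      (a := (a, 0, 0, 0)) (by simp) (by simp)
    exact GMA.eq_zero_of_mul_eq_zero_of_faithful_left hfaithL hTf hfT fun x =>
      hδ.map_mul_eq_zero hm.ne' hn.ne' hmn hδ1 he (by simp) (by simp) (by simp) (by simp)
  have hB : δ (0, 0, 0, b) = 0 := by
    obtain ⟨hTe, heT⟩ := hδ.map_mul_eq_zero_and_mul_map_eq_zero hm.ne' hn.ne' hmn hδ1 he
      (a := (0, 0, 0, b)) (by simp) (by simp)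
    exact GMA.eq_zero_of_mul_eq_zero_of_faithful_right hfaithR hTe heT fun x =>
      hδ.mul_map_eq_zero hm.ne' hn.ne' hmn hδ1 he (by simp) (by simp) (by simp) (by simp)
  have hM : δ (0, x, 0, 0) = 0 :=
    hδ.map_eq_zero_of_mul_eq_self_of_mul_eq_zero hmn hδ1 he (by simp) (by simp)
  have hN : δ (0, 0, y, 0) = 0 :=
    hδ.map_eq_zero_of_mul_eq_self_of_mul_eq_zero hmn hδ1 hf (by simp) (by simp)
  calc δ (a, x, y, b) = δ (a, 0, 0, 0) + δ (0, x, 0, 0) + δ (0, 0, y, 0) + δ (0, 0, 0, b) := by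
        rw [← hadd, ← hadd, ← hadd]; simp
    _ = 0 := by rw [hA, hM, hN, hB]; simp
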